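/- A ν-Dyck path beginning with a north step and ending with an east step is uniquely determined by the set of lattice points at which its valleys occur; likewise it is uniquely determined by the set of its high peaks. -/

import Mathlib

/-- Steps of a (Schröder) lattice path: north, east, diagonal. -/
inductive Step : Type
  | N | E | D
deriving DecidableEq, Repr

/-- Total horizontal displacement of a path. -/
def eLen (p : List Step) : ℕ := p.count Step.E + p.count Step.D

/-- Total vertical displacement of a path. -/
def nLen (p : List Step) : ℕ := p.count Step.N + p.count Step.D

/-- A lattice path uses only `N` and `E` steps. -/
def IsLatticePath (ν : List Step) : Prop := Step.D ∉ ν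

/-- `colVal p x` is twice the starting height of the step of `p` crossing the vertical
strip between abscissas `x` and `x+1`, plus `1` if that step is diagonal.  Comparing these
values columnwise is equivalent to comparing the heights of the paths over each strip. -/
def colVal : List Step → ℕ → ℕ
  | [], _ => 0
  | Step.N :: p, x => colVal p x + 2
  | Step.E :: _, 0 => 0
  | Step.E :: p, x+1 => colVal p x
  | Step.D :: _, 0 => 1
  | Step.D :: p, x+1 => colVal p x + 2

/-- `π` stays weakly above `ρ` (same endpoints intended). -/
def WeaklyAbove (π ρ : List Step) : Prop := ∀ x, colVal ρ x ≤ colVal π x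

/-- Replace every peak (consecutive `NE`) of a path by a diagonal step; applied to `ν`
this gives the path `μ` of the large ν-Schröder path definition. -/
def cutPeaks : List Step → List Step
  | [] => []
  | Step.N :: Step.E :: p => Step.D :: cutPeaks p
  | s :: p => s :: cutPeaks p

/-- A ν-Dyck path: an `N,E` path with the same endpoints as `ν` staying weakly above `ν`. -/
def IsNuDyck (ν π : List Step) : Prop :=
  Step.D ∉ π ∧ eLen π = eLen ν ∧ nLen π = nLen ν ∧ WeaklyAbove π ν

/-- A (small) ν-Schröder path: an `N,E,D` path with the same endpoints as `ν` staying weakly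
above `ν` (this automatically forbids diagonal steps on the ν-diagonal). -/
def IsSmallSchroder (ν π : List Step) : Prop :=
  eLen π = eLen ν ∧ nLen π = nLen ν ∧ WeaklyAbove π ν

/-- A large ν-Schröder path: an `N,E,D` path with the same endpoints as `ν` staying weakly
above the path obtained from `ν` by replacing each peak by a diagonal step. -/
def IsLargeSchroder (ν π : List Step) : Prop :=
  eLen π = eLen ν ∧ nLen π = nLen ν ∧ WeaklyAbove π (cutPeaks ν)

/-- Number of peaks (consecutive `NE` pairs). -/
def peaks (p : List Step) : ℕ := (p.zip p.tail).count (Step.N, Step.E)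

/-- Number of valleys (consecutive `EN` pairs). -/
def valleys (p : List Step) : ℕ := (p.zip p.tail).count (Step.E, Step.N)

/-- Lattice points at which valleys of a path occur (starting the path at `(x,y)`). -/
def valleyPts : List Step → ℕ → ℕ → List (ℕ × ℕ)
  | [], _, _ => []
  | Step.E :: p, x, y =>
      (if p.head? = some Step.N then [(x+1, y)] else []) ++ valleyPts p (x+1) y
  | Step.N :: p, x, y => valleyPts p x (y+1)
  | Step.D :: p, x, y => valleyPts p (x+1) (y+1)

/-- Lattice points at which high peaks (peaks strictly above `ν`) of a path occur. -/
def highPeakPts (ν : List Step) : List Step → ℕ → ℕ → List (ℕ × ℕ)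
  | [], _, _ => []
  | Step.N :: p, x, y =>
      (if p.head? = some Step.E ∧ colVal ν x < 2*(y+1) then [(x, y+1)] else []) ++
        highPeakPts ν p x (y+1)
  | Step.E :: p, x, y => highPeakPts ν p (x+1) y
  | Step.D :: p, x, y => highPeakPts ν p (x+1) (y+1)

/-- Number of high peaks of `π` relative to `ν`. -/
def highPeaks (ν π : List Step) : ℕ := (highPeakPts ν π 0 0).length

/-- j-th ν-Narayana number: number of ν-Dyck paths with exactly `j` valleys. -/
noncomputable def Nar (ν : List Step) (j : ℕ) : ℕ :=
  Nat.card {π : List Step // IsNuDyck ν π ∧ valleys π = j}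

/-- Number of small ν-Schröder paths with exactly `i` diagonal steps. -/
noncomputable def schNum (ν : List Step) (i : ℕ) : ℕ :=
  Nat.card {π : List Step // IsSmallSchroder ν π ∧ π.count Step.D = i}

/-- `lowH ν x` is the lowest height of a point of `ν` at abscissa `x`. -/
def lowH : List Step → ℕ → ℕ
  | _, 0 => 0
  | [], _+1 => 0
  | Step.N :: p, x+1 => lowH p (x+1) + 1
  | Step.E :: p, x+1 => lowH p x
  | Step.D :: p, x+1 => lowH p x + 1

/-- The lowest lattice path from `(0,0)` to `(b,a)` weakly above the line segment
from `(0,0)` to `(b,a)`. -/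
def nuAB (a b : ℕ) : List Step :=
  (List.range b).flatMap (fun x =>
    List.replicate (((x+1)*a + b - 1)/b - (x*a + b - 1)/b) Step.N ++ [Step.E])

/-- Number of large rational `(a,b)`-Schröder paths with `i` diagonal steps. -/
noncomputable def largeCount (a b i : ℕ) : ℕ :=
  Nat.card {π : List Step // IsLargeSchroder (nuAB a b) π ∧ π.count Step.D = i}

/-- Number of small rational `(a,b)`-Schröder paths with `i` diagonal steps. -/
noncomputable def smallCount (a b i : ℕ) : ℕ :=
  Nat.card {π : List Step // IsSmallSchroder (nuAB a b) π ∧ π.count Step.D = i}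

/-- Binomial coefficient with an integer lower entry (zero when negative). -/
def chooseZ (n : ℕ) (k : ℤ) : ℕ := if 0 ≤ k then n.choose k.toNat else 0

/-- The region weakly above `ν` in the rectangle `[0,b] × [0,a]`. -/
def InRegion (ν : List Step) (p : ℕ × ℕ) : Prop :=
  p.1 ≤ eLen ν ∧ p.2 ≤ nLen ν ∧ lowH ν p.1 ≤ p.2

/-- Two points of the region are ν-incompatible if one is strictly southwest of the other and
the rectangle they span lies in the region (equivalently its bottom-right corner does). -/
def Incompat (ν : List Step) (p q : ℕ × ℕ) : Prop :=
  ((p.1 < q.1 ∧ p.2 < q.2) ∨ (q.1 < p.1 ∧ q.2 < p.2)) ∧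
    InRegion ν (max p.1 q.1, min p.2 q.2)

/-- A ν-binary tree: a maximal set of pairwise ν-compatible points of the region. -/
def IsBinaryTree (ν : List Step) (T : Finset (ℕ × ℕ)) : Prop :=
  (∀ p ∈ T, InRegion ν p) ∧ (∀ p ∈ T, ∀ q ∈ T, ¬ Incompat ν p q) ∧
    ∀ r, InRegion ν r → (∀ p ∈ T, ¬ Incompat ν r p) → r ∈ T

/-- A ν-Schröder tree: pairwise ν-compatible points of the region containing the root
`(0,a)` and meeting every row and every column. -/
def IsSchroderTree (ν : List Step) (T : Finset (ℕ × ℕ)) : Prop :=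
  (∀ p ∈ T, InRegion ν p) ∧ (∀ p ∈ T, ∀ q ∈ T, ¬ Incompat ν p q) ∧
    (0, nLen ν) ∈ T ∧ (∀ y ≤ nLen ν, ∃ p ∈ T, p.2 = y) ∧ (∀ x ≤ eLen ν, ∃ p ∈ T, p.1 = x)

/-- One contraction step: delete a node, provided the result is still a ν-Schröder tree. -/
def ContractStep (ν : List Step) (T T' : Finset (ℕ × ℕ)) : Prop :=
  ∃ q ∈ T, T' = T.erase q ∧ IsSchroderTree ν T'

/-- `p` is a leaf of the (plane tree associated to the) node set `T`: no node strictly below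
it in its column and none strictly to its right in its row. -/
def IsLeafIn (T : Finset (ℕ × ℕ)) (p : ℕ × ℕ) : Prop :=
  (∀ q ∈ T, ¬(q.1 = p.1 ∧ q.2 < p.2)) ∧ (∀ q ∈ T, ¬(q.2 = p.2 ∧ p.1 < q.1))

/-- Starting points of vertical runs and ending points of horizontal runs of `ν`. -/
def leafPts (ν : List Step) : Finset (ℕ × ℕ) :=
  (valleyPts ν 0 0).toFinset ∪ (if ν.head? = some Step.N then {((0 : ℕ), (0 : ℕ))} else ∅) ∪
    (if ν.getLast? = some Step.E then {(eLen ν, nLen ν)} else ∅)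

/-- `horizNu ν x y`: maximal number of east steps that can be placed starting at `(x,y)`
before crossing `ν` (staying within the bounding rectangle). -/
def horizNu (ν : List Step) (x y : ℕ) : ℕ :=
  ((Finset.Icc 1 (eLen ν - x)).filter (fun k => lowH ν (x + k) ≤ y)).card

/-- No `N` step of the given path (started at `(x,y)`) has initial point with
`horizNu`-value `h`. -/
def noNAt (ν : List Step) (h : ℕ) : List Step → ℕ → ℕ → Prop
  | [], _, _ => True
  | Step.N :: p, x, y => horizNu ν x y ≠ h ∧ noNAt ν h p x (y+1)
  | Step.E :: p, x, y => noNAt ν h p (x+1) y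
  | Step.D :: p, x, y => noNAt ν h p (x+1) (y+1)

/-- Right contraction: replace a consecutive `EN` pair (a valley) by a `D` step. -/
def RightC (μ lam : List Step) : Prop :=
  ∃ p q, μ = p ++ Step.E :: Step.N :: q ∧ lam = p ++ Step.D :: q

/-- Left contraction: delete an `E` step together with the most recent preceding `N` step
whose initial point has the same `horizNu` statistic as the initial point of the `E` step,
shift the intermediate subpath, and place a `D` step at the initial point of the `N` step. -/
def LeftC (ν μ lam : List Step) : Prop :=
  ∃ p m q, μ = p ++ Step.N :: (m ++ Step.E :: q) ∧ lam = p ++ Step.D :: (m ++ q) ∧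
    horizNu ν (eLen p) (nLen p)
      = horizNu ν (eLen (p ++ Step.N :: m)) (nLen (p ++ Step.N :: m)) ∧
    noNAt ν (horizNu ν (eLen (p ++ Step.N :: m)) (nLen (p ++ Step.N :: m)))
      m (eLen p) (nLen p + 1)

/-- Diagonal contraction: delete an `E` step ending at the initial point `r` of a `D` step,
together with the most recent preceding `N` step whose initial point `s` satisfies
`horizNu s = horizNu r`, shift the intermediate subpath, and place a `D` step at `s`. -/
def DiagC (ν μ lam : List Step) : Prop :=
  ∃ p m q, μ = p ++ Step.N :: (m ++ Step.E :: Step.D :: q) ∧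
    lam = p ++ Step.D :: (m ++ Step.D :: q) ∧
    horizNu ν (eLen p) (nLen p)
      = horizNu ν (eLen (p ++ Step.N :: m) + 1) (nLen (p ++ Step.N :: m)) ∧
    noNAt ν (horizNu ν (eLen (p ++ Step.N :: m) + 1) (nLen (p ++ Step.N :: m)))
      m (eLen p) (nLen p + 1)

/-- Cover relation of the contraction poset of ν-Schröder paths. -/
def Covers (ν μ lam : List Step) : Prop :=
  IsSmallSchroder ν μ ∧ IsSmallSchroder ν lam ∧
    (RightC μ lam ∨ LeftC ν μ lam ∨ DiagC ν μ lam)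

/-- The Morse matching: `σ` (having a `D` step preceded by no valley) is matched with the
path `π` obtained by replacing the first such `D` step by `EN`. -/
def MorseM (ν : List Step) : Set (List Step × List Step) :=
  { z | ∃ p q, Step.D ∉ p ∧ valleys p = 0 ∧
      z.2 = p ++ Step.D :: q ∧ z.1 = p ++ Step.E :: Step.N :: q ∧ IsSmallSchroder ν z.2 }

/-- Twice the area between a small ν-Schröder path and `ν`. -/
def area2 (ν π : List Step) : ℕ :=
  ∑ x ∈ Finset.range (eLen ν), (colVal π x - colVal ν x)

/-- An `(I,J̄)`-forest: increasing, non-crossing arcs. -/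
def IsIJForest (I J : Finset ℕ) (F : Finset (ℕ × ℕ)) : Prop :=
  (∀ a ∈ F, a.1 ∈ I ∧ a.2 ∈ J ∧ a.1 < a.2) ∧
    (∀ a ∈ F, ∀ a' ∈ F, ¬(a.1 < a'.1 ∧ a'.1 < a.2 ∧ a.2 < a'.2))

/-- A covering `(I,J̄)`-forest: contains the arc `(1,n)` and has no isolated node. -/
def IsCoveringForest (n : ℕ) (I J : Finset ℕ) (F : Finset (ℕ × ℕ)) : Prop :=
  IsIJForest I J F ∧ (1, n) ∈ F ∧
    (∀ i ∈ I, ∃ a ∈ F, a.1 = i) ∧ (∀ j ∈ J, ∃ a ∈ F, a.2 = j)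

/-- The lattice path read off from the interleaving of `I` and `J̄` (elements `2,…,n-1`,
`E` for elements of `I`, `N` for the others). -/
def nuOf (n : ℕ) (I : Finset ℕ) : List Step :=
  (List.range' 2 (n - 2)).map (fun k => if k ∈ I then Step.E else Step.N)

/-! A path without diagonal steps is determined by its column heights `colVal`. If two such
paths with the same endpoints differ, compare them at the last column where they differ: the
lower one rises right after that column, so it has a valley there, at a height where the other
path has none. For high peaks use the first column where they differ instead: the higher path
rises just before it, so it has a peak there, which is high because the lower path stays weakly
above `ν`, and which the lower path cannot share. -/

@[simp] lemma eLen_nil : eLen [] = 0 := rfl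

@[simp] lemma nLen_nil : nLen [] = 0 := rfl

@[simp] lemma eLen_cons_N (p : List Step) : eLen (Step.N :: p) = eLen p := by simp [eLen]

@[simp] lemma eLen_cons_E (p : List Step) : eLen (Step.E :: p) = eLen p + 1 := by
  simp [eLen, add_right_comm]

@[simp] lemma eLen_cons_D (p : List Step) : eLen (Step.D :: p) = eLen p + 1 := by
  simp [eLen, add_assoc]

@[simp] lemma nLen_cons_N (p : List Step) : nLen (Step.N :: p) = nLen p + 1 := by
  simp [nLen, add_right_comm]

@[simp] lemma nLen_cons_E (p : List Step) : nLen (Step.E :: p) = nLen p := by simp [nLen]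

@[simp] lemma nLen_cons_D (p : List Step) : nLen (Step.D :: p) = nLen p + 1 := by
  simp [nLen, add_assoc]

lemma colVal_append_eLen_add (q r : List Step) (x : ℕ) :
    colVal (q ++ r) (eLen q + x) = colVal r x + 2 * nLen q := by
  induction q with
  | nil => simp
  | cons s q ih =>
    cases s
    · simp only [List.cons_append, colVal, eLen_cons_N, nLen_cons_N, ih]; ring
    · simp only [List.cons_append, eLen_cons_E, nLen_cons_E, add_right_comm _ 1 x, colVal, ih]
    · simp only [List.cons_append, eLen_cons_D, nLen_cons_D, add_right_comm _ 1 x, colVal, ih]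
      ring

lemma colVal_of_eLen_le {p : List Step} {x : ℕ} (h : eLen p ≤ x) : colVal p x = 2 * nLen p := by
  obtain ⟨k, rfl⟩ := Nat.exists_eq_add_of_le h
  simpa [colVal] using colVal_append_eLen_add p [] k

lemma colVal_append_E (q r : List Step) : colVal (q ++ Step.E :: r) (eLen q) = 2 * nLen q := by
  simpa [colVal] using colVal_append_eLen_add q (Step.E :: r) 0

lemma colVal_append_N_E (q r : List Step) :
    colVal (q ++ Step.N :: Step.E :: r) (eLen q) = 2 * nLen q + 2 := by
  simpa [colVal, add_comm] using colVal_append_eLen_add q (Step.N :: Step.E :: r) 0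

lemma monotone_colVal (p : List Step) : Monotone (colVal p) := by
  refine monotone_nat_of_le_succ fun x => ?_
  induction p generalizing x with
  | nil => rfl
  | cons s p ih =>
    cases s <;> cases x <;> simp only [colVal] <;> grind

lemma eq_of_colVal_eq {p q : List Step} (hp : Step.D ∉ p) (hq : Step.D ∉ q)
    (he : eLen p = eLen q) (h : ∀ x, colVal p x = colVal q x) : p = q := by
  induction p generalizing q with
  | nil =>
    rcases q with _ | ⟨_ | _ | _, q⟩
    · rfl
    · simpa [colVal] using h 0
    · simp at he
    · simp at hq
  | cons s p ih =>
    rcases q with _ | ⟨t, q⟩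
    · cases s
      · simpa [colVal] using h 0
      · simp at he
      · simp at hp
    have hp' : Step.D ∉ p := fun hD => hp (List.mem_cons_of_mem _ hD)
    have hq' : Step.D ∉ q := fun hD => hq (List.mem_cons_of_mem _ hD)
    cases s <;> cases t <;> simp at hp hq
    · simpa using ih hp' hq' (by simpa using he) fun x => by simpa [colVal] using h x
    · simpa [colVal] using h 0
    · simpa [colVal] using h 0
    · simpa using ih hp' hq' (by simpa using he) fun x => by simpa [colVal] using h (x + 1)

lemma List.exists_cons_eq_append_cons_cons {α : Type*} {a b s : α} {p : List α}
    {P : List α → Prop} :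
    (∃ q r, s :: p = q ++ a :: b :: r ∧ P q) ↔
      (s = a ∧ p.head? = some b ∧ P []) ∨ ∃ q r, p = q ++ a :: b :: r ∧ P (s :: q) := by
  simp only [List.cons_eq_append_iff]
  constructor
  · rintro ⟨q, r, ⟨rfl, h⟩ | ⟨q, rfl, rfl⟩, hP⟩
    · obtain ⟨rfl, rfl⟩ := List.cons.inj h
      exact .inl ⟨rfl, rfl, hP⟩
    · exact .inr ⟨q, r, rfl, hP⟩
  · rintro (⟨rfl, hp, hP⟩ | ⟨q, r, rfl, hP⟩)
    · obtain ⟨r, rfl⟩ : ∃ r, p = b :: r := by cases p <;> simp_all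
      exact ⟨[], r, .inl ⟨rfl, rfl⟩, hP⟩
    · exact ⟨s :: q, r, .inr ⟨q, rfl, rfl⟩, hP⟩

lemma mem_valleyPts_iff (p : List Step) (x y u v : ℕ) :
    (u, v) ∈ valleyPts p x y ↔
      ∃ q r, p = q ++ Step.E :: Step.N :: r ∧ u = x + eLen q + 1 ∧ v = y + nLen q := by
  induction p generalizing x y with
  | nil => simp [valleyPts]
  | cons s p ih =>
    rw [List.exists_cons_eq_append_cons_cons]
    cases s <;> simp [valleyPts, ih, add_assoc, add_comm, add_left_comm]

lemma mem_highPeakPts_iff (ν p : List Step) (x y u v : ℕ) :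
    (u, v) ∈ highPeakPts ν p x y ↔
      ∃ q r, p = q ++ Step.N :: Step.E :: r ∧ u = x + eLen q ∧ v = y + nLen q + 1 ∧
        colVal ν u < 2 * v := by
  induction p generalizing x y with
  | nil => simp [highPeakPts]
  | cons s p ih =>
    rw [List.exists_cons_eq_append_cons_cons]
    cases s
    case N =>
      simp only [highPeakPts, List.mem_append, List.mem_ite_nil_right, List.mem_cons,
        Prod.mk.injEq, List.not_mem_nil, or_false, ih, add_comm, add_left_comm, Nat.reduceAdd,
        exists_and_right, eLen_nil, add_zero, nLen_nil, true_and, eLen_cons_N, nLen_cons_N]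
      exact or_congr_left ⟨fun ⟨⟨h, hν⟩, hu, hv⟩ => ⟨h, hu, hv, hu ▸ hv ▸ hν⟩,
        fun ⟨h, hu, hv, hν⟩ => ⟨⟨h, hu ▸ hv ▸ hν⟩, hu, hv⟩⟩
    all_goals simp [highPeakPts, ih, add_assoc, add_comm, add_left_comm]

lemma exists_valley_of_colVal_lt_succ {p : List Step} (hp : Step.D ∉ p) {x : ℕ}
    (h : colVal p x < colVal p (x + 1)) : ∃ q r, p = q ++ Step.E :: Step.N :: r ∧ eLen q = x := by
  induction p generalizing x with
  | nil => simp [colVal] at h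
  | cons s p ih =>
    have hp' : Step.D ∉ p := fun hD => hp (List.mem_cons_of_mem _ hD)
    cases s
    case D => simp at hp
    case N =>
      obtain ⟨q, r, rfl, rfl⟩ := ih hp' (by simpa [colVal] using h)
      exact ⟨Step.N :: q, r, rfl, by simp⟩
    case E =>
      cases x
      case zero =>
        rcases p with _ | ⟨_ | _ | _, r⟩ <;> simp [colVal] at h hp'
        exact ⟨[], r, rfl, rfl⟩
      case succ x =>
        obtain ⟨q, r, rfl, rfl⟩ := ih hp' (by simpa [colVal] using h)
        exact ⟨Step.E :: q, r, rfl, by simp⟩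

lemma exists_peak_of_colVal_rise {p : List Step} (hp : Step.D ∉ p) {x : ℕ} (hx : x < eLen p)
    (hpos : 0 < colVal p x) (hrise : ∀ t < x, colVal p t < colVal p x) :
    ∃ q r, p = q ++ Step.N :: Step.E :: r ∧ eLen q = x := by
  induction p generalizing x with
  | nil => simp at hx
  | cons s p ih =>
    have hp' : Step.D ∉ p := fun hD => hp (List.mem_cons_of_mem _ hD)
    cases s
    case D => simp at hp
    case E =>
      cases x
      case zero => simp [colVal] at hpos
      case succ x =>
        obtain ⟨q, r, rfl, rfl⟩ := ih hp' (by simpa using hx) (by simpa [colVal] using hpos)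
          fun t ht => by simpa [colVal] using hrise (t + 1) (by omega)
        exact ⟨Step.E :: q, r, rfl, by simp⟩
    case N =>
      have descend (hpos' : 0 < colVal p x) :
          ∃ q r, Step.N :: p = q ++ Step.N :: Step.E :: r ∧ eLen q = x := by
        obtain ⟨q, r, rfl, rfl⟩ := ih hp' (by simpa using hx) hpos'
          fun t ht => by simpa [colVal] using hrise t ht
        exact ⟨Step.N :: q, r, rfl, by simp⟩
      rcases x with _ | x
      · rcases p with _ | ⟨_ | _ | _, r⟩
        · simp at hx
        · exact descend (by simp [colVal])
        · exact ⟨[], r, rfl, rfl⟩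
        · simp at hp'
      · have := hrise 0 (by omega)
        simp only [colVal] at this
        exact descend (by omega)

lemma colVal_le_of_valleyPts_subset {π σ : List Step} (hσ : Step.D ∉ σ)
    (hV : valleyPts σ 0 0 ⊆ valleyPts π 0 0) {x : ℕ}
    (hx : colVal π (x + 1) ≤ colVal σ (x + 1)) : colVal π x ≤ colVal σ x := by
  by_contra! hlt
  obtain ⟨q, r, rfl, rfl⟩ := exists_valley_of_colVal_lt_succ hσ
    (hlt.trans_le ((monotone_colVal π (Nat.le_succ _)).trans hx))
  have hvalley : (eLen q + 1, nLen q) ∈ valleyPts π 0 0 :=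
    hV ((mem_valleyPts_iff _ _ _ _ _).2 ⟨q, r, rfl, by simp, by simp⟩)
  obtain ⟨q', r', rfl, he, hn⟩ := (mem_valleyPts_iff _ _ _ _ _).1 hvalley
  have hπx : colVal (q' ++ Step.E :: Step.N :: r') (eLen q) = 2 * nLen q := by
    rw [show eLen q = eLen q' by omega, hn, zero_add]
    exact colVal_append_E q' _
  have hσx := colVal_append_E q (Step.N :: r)
  omega

lemma colVal_le_of_highPeakPts_subset {ν π σ : List Step} (hπ : Step.D ∉ π)
    (hσν : WeaklyAbove σ ν) (hH : highPeakPts ν π 0 0 ⊆ highPeakPts ν σ 0 0) {x : ℕ}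
    (hx : x < eLen π) (hbefore : ∀ t < x, colVal π t ≤ colVal σ t) :
    colVal π x ≤ colVal σ x := by
  by_contra! hlt
  obtain ⟨q, r, rfl, rfl⟩ := exists_peak_of_colVal_rise hπ hx (by omega)
    fun t ht => (hbefore t ht).trans_lt ((monotone_colVal σ ht.le).trans_lt hlt)
  have hπx := colVal_append_N_E q r
  have hpeak : (eLen q, nLen q + 1) ∈ highPeakPts ν σ 0 0 :=
    hH ((mem_highPeakPts_iff _ _ _ _ _ _).2
      ⟨q, r, rfl, by simp, by simp, by have := hσν (eLen q); omega⟩)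
  obtain ⟨q', r', rfl, he, hn, -⟩ := (mem_highPeakPts_iff _ _ _ _ _ _).1 hpeak
  have hσx : colVal (q' ++ Step.N :: Step.E :: r') (eLen q) = 2 * nLen q + 2 := by
    rw [show eLen q = eLen q' by omega, show nLen q = nLen q' by omega]
    exact colVal_append_N_E q' r'
  omega

theorem eq_of_valleyPts_toFinset_eq {π σ : List Step} (hπ : Step.D ∉ π) (hσ : Step.D ∉ σ)
    (he : eLen π = eLen σ) (hn : nLen π = nLen σ)
    (hV : (valleyPts π 0 0).toFinset = (valleyPts σ 0 0).toFinset) : π = σ := by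
  have hmem (z : ℕ × ℕ) : z ∈ valleyPts π 0 0 ↔ z ∈ valleyPts σ 0 0 := by
    rw [← List.mem_toFinset, hV, List.mem_toFinset]
  have hcol (k x : ℕ) (hk : eLen π ≤ x + k) : colVal π x = colVal σ x := by
    induction k generalizing x with
    | zero => rw [colVal_of_eLen_le (x := x) hk, colVal_of_eLen_le (x := x) (he ▸ hk), hn]
    | succ k ih =>
      have hnext := ih (x + 1) (by omega)
      exact le_antisymm (colVal_le_of_valleyPts_subset hσ (fun z => (hmem z).2) hnext.le)
        (colVal_le_of_valleyPts_subset hπ (fun z => (hmem z).1) hnext.ge)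
  exact eq_of_colVal_eq hπ hσ he fun x => hcol (eLen π) x (Nat.le_add_left _ _)

theorem eq_of_highPeakPts_toFinset_eq {ν π σ : List Step} (hπ : Step.D ∉ π)
    (hσ : Step.D ∉ σ) (he : eLen π = eLen σ) (hn : nLen π = nLen σ)
    (hπν : WeaklyAbove π ν) (hσν : WeaklyAbove σ ν)
    (hH : (highPeakPts ν π 0 0).toFinset = (highPeakPts ν σ 0 0).toFinset) : π = σ := by
  have hmem (z : ℕ × ℕ) : z ∈ highPeakPts ν π 0 0 ↔ z ∈ highPeakPts ν σ 0 0 := by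
    rw [← List.mem_toFinset, hH, List.mem_toFinset]
  have hcol (x : ℕ) : colVal π x = colVal σ x := by
    induction x using Nat.strong_induction_on with
    | _ x ih =>
      rcases lt_or_ge x (eLen π) with hx | hx
      · exact le_antisymm
          (colVal_le_of_highPeakPts_subset hπ hσν (fun z => (hmem z).1) hx (ih · · |>.le))
          (colVal_le_of_highPeakPts_subset hσ hπν (fun z => (hmem z).2) (he ▸ hx)
            (ih · · |>.ge))
      · rw [colVal_of_eLen_le hx, colVal_of_eLen_le (he ▸ hx), hn]
  exact eq_of_colVal_eq hπ hσ he hcol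

theorem nuDyck_determined_by_valleys_and_highPeaks_general (ν : List Step)
    (π σ : List Step) (hπ : IsNuDyck ν π) (hσ : IsNuDyck ν σ) :
    ((valleyPts π 0 0).toFinset = (valleyPts σ 0 0).toFinset → π = σ) ∧
    ((highPeakPts ν π 0 0).toFinset = (highPeakPts ν σ 0 0).toFinset → π = σ) := by
  obtain ⟨hπD, hπe, hπn, hπν⟩ := hπ
  obtain ⟨hσD, hσe, hσn, hσν⟩ := hσ
  have he : eLen π = eLen σ := hπe.trans hσe.symm
  have hn : nLen π = nLen σ := hπn.trans hσn.symm
  exact ⟨eq_of_valleyPts_toFinset_eq hπD hσD he hn,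
    eq_of_highPeakPts_toFinset_eq hπD hσD he hn hπν hσν⟩

/-- A ν-Dyck path (for ν beginning with a north step and ending with an east
step) is uniquely determined by the set of lattice points of its valleys, and likewise by the
set of lattice points of its high peaks. -/
theorem nuDyck_determined_by_valleys_and_highPeaks (ν : List Step) (hν : IsLatticePath ν)
    (hhead : ν.head? = some Step.N) (hlast : ν.getLast? = some Step.E)
    (π σ : List Step) (hπ : IsNuDyck ν π) (hσ : IsNuDyck ν σ) :
    ((valleyPts π 0 0).toFinset = (valleyPts σ 0 0).toFinset → π = σ) ∧
    ((highPeakPts ν π 0 0).toFinset = (highPeakPts ν σ 0 0).toFinset → π = σ) :=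
  nuDyck_determined_by_valleys_and_highPeaks_general ν π σ hπ hσ
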